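/- arXiv:1708.03790 — 3 statements merged into one kernel-verified Lean document; each statement's English description precedes it below -/
import Mathlib

section
/- For all integers n > l, all 0 < α < 1, and all m ≥ n+1, there is a constant C (depending only on α) with |Λ^{-α}(m−n) − Λ^{-α}(m−l)| ≤ C (n−l) / (m−n)^{2−α}. -/
open scoped BigOperators

/-!
Writing `Λ^{-α}(k+1) = Λ^{-α}(k) · (1 - (1-α)/(k+1))` and using Bernoulli's inequality
`(1 + 1/t)^{1-α} ≤ 1 + (1-α)/t`, induction gives `Λ^{-α}(k) ≤ (k+1)^{α-1}`. Hence the consecutive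
differences `Λ^{-α}(k) - Λ^{-α}(k+1) = (1-α)/(k+1) · Λ^{-α}(k)` are at most `(1-α)(k+1)^{α-2}`,
and telescoping over the `n - l` steps from `m - n` to `m - l` gives the bound with `C = 1`.
-/

/-- `Lam α m` is the kernel `Λ^{-α}(m) = α(α+1)⋯(α+m-1)/m!`, with `Lam α 0 = 1`. -/
noncomputable def Lam (α : ℝ) (m : ℕ) : ℝ :=
  (∏ i ∈ Finset.range m, (α + i)) / (Nat.factorial m)

lemma Lam_succ (α : ℝ) (k : ℕ) : Lam α (k + 1) = Lam α k * ((α + k) / (k + 1)) := by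
  unfold Lam
  rw [Finset.prod_range_succ, Nat.factorial_succ]
  push_cast
  rw [div_mul_div_comm, mul_comm ((k : ℝ) + 1)]

lemma Lam_nonneg {α : ℝ} (hα : 0 ≤ α) (k : ℕ) : 0 ≤ Lam α k := by
  unfold Lam
  have : 0 ≤ ∏ i ∈ Finset.range k, (α + i) := Finset.prod_nonneg fun i _ => by positivity
  positivity

lemma Lam_sub_Lam_succ (α : ℝ) (k : ℕ) :
    Lam α k - Lam α (k + 1) = (1 - α) / (k + 1) * Lam α k := by
  rw [Lam_succ]
  field_simp
  ring

lemma Lam_antitone {α : ℝ} (h0 : 0 ≤ α) (h1 : α ≤ 1) : Antitone (Lam α) :=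
  antitone_nat_of_succ_le fun k => by
    have hdiff := Lam_sub_Lam_succ α k
    have : 0 ≤ (1 - α) / (k + 1) * Lam α k :=
      mul_nonneg (div_nonneg (by linarith) (by positivity)) (Lam_nonneg h0 k)
    linarith

lemma one_sub_mul_le_one_add_rpow_neg {x β : ℝ} (hx : 0 ≤ x) (hβ0 : 0 ≤ β) (hβ1 : β ≤ 1) :
    1 - β * x ≤ (1 + x) ^ (-β) := by
  have hβx : 0 ≤ β * x := mul_nonneg hβ0 hx
  calc 1 - β * x ≤ (1 + β * x)⁻¹ := by
        rw [← one_div, le_div_iff₀ (by positivity)]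
        nlinarith [sq_nonneg (β * x)]
    _ ≤ ((1 + x) ^ β)⁻¹ := by
        gcongr
        exact rpow_one_add_le_one_add_mul_self (by linarith) hβ0 hβ1
    _ = (1 + x) ^ (-β) := (Real.rpow_neg (by linarith) β).symm

lemma Lam_le_rpow {α : ℝ} (h0 : 0 ≤ α) (h1 : α ≤ 1) (k : ℕ) :
    Lam α k ≤ ((k : ℝ) + 1) ^ (α - 1) := by
  induction k with
  | zero => simp [Lam]
  | succ k ih =>
    set t : ℝ := (k : ℝ) + 1 with ht
    have ht0 : 0 < t := by positivity
    have hratio : (α + k) / (k + 1) = 1 - (1 - α) * t⁻¹ := by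
      field_simp
      ring
    have hdecr : 0 ≤ 1 - (1 - α) * t⁻¹ := by
      rw [← hratio]; positivity
    calc Lam α (k + 1) = Lam α k * (1 - (1 - α) * t⁻¹) := by rw [Lam_succ, hratio]
      _ ≤ t ^ (α - 1) * (1 + t⁻¹) ^ (α - 1) := by
        gcongr
        simpa using one_sub_mul_le_one_add_rpow_neg (β := 1 - α) (inv_nonneg.2 ht0.le)
          (by linarith) (by linarith)
      _ = (((k + 1 : ℕ) : ℝ) + 1) ^ (α - 1) := by
        rw [← Real.mul_rpow ht0.le (by positivity), mul_add, mul_inv_cancel₀ ht0.ne', ht]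
        push_cast
        ring_nf

lemma Lam_sub_Lam_succ_le {α : ℝ} (h0 : 0 ≤ α) (h1 : α ≤ 1) (k : ℕ) :
    Lam α k - Lam α (k + 1) ≤ (1 - α) * ((k : ℝ) + 1) ^ (α - 2) := by
  have hk : (k : ℝ) + 1 ≠ 0 := by positivity
  calc Lam α k - Lam α (k + 1) = (1 - α) / (k + 1) * Lam α k := Lam_sub_Lam_succ α k
    _ ≤ (1 - α) / (k + 1) * ((k : ℝ) + 1) ^ (α - 1) := by
        gcongr
        exact Lam_le_rpow h0 h1 k
    _ = (1 - α) * ((k : ℝ) + 1) ^ (α - 2) := by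
        rw [show α - 2 = (α - 1) - 1 by ring, Real.rpow_sub_one hk (α - 1)]
        ring

lemma Lam_sub_Lam_add_le {α : ℝ} (h0 : 0 ≤ α) (h1 : α ≤ 1) (k d : ℕ) :
    Lam α k - Lam α (k + d) ≤ d * ((1 - α) * ((k : ℝ) + 1) ^ (α - 2)) := by
  calc Lam α k - Lam α (k + d) = ∑ i ∈ Finset.range d, (Lam α (k + i) - Lam α (k + i + 1)) :=
        (Finset.sum_range_sub' (fun i => Lam α (k + i)) d).symm
    _ ≤ ∑ i ∈ Finset.range d, (1 - α) * ((k : ℝ) + 1) ^ (α - 2) := by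
        refine Finset.sum_le_sum fun i _ => (Lam_sub_Lam_succ_le h0 h1 (k + i)).trans ?_
        have : 0 ≤ 1 - α := by linarith
        gcongr (1 - α) * ?_
        exact Real.rpow_le_rpow_of_nonpos (by positivity) (by simp) (by linarith)
    _ = d * ((1 - α) * ((k : ℝ) + 1) ^ (α - 2)) := by simp

lemma abs_Lam_sub_Lam_add_le {α : ℝ} (h0 : 0 ≤ α) (h1 : α ≤ 1) {k : ℕ} (hk : 0 < k) (d : ℕ) :
    |Lam α k - Lam α (k + d)| ≤ d / (k : ℝ) ^ (2 - α) := by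
  have hk' : (0 : ℝ) < k := by exact_mod_cast hk
  rw [abs_of_nonneg (sub_nonneg.2 (Lam_antitone h0 h1 (Nat.le_add_right k d)))]
  calc Lam α k - Lam α (k + d) ≤ d * ((1 - α) * ((k : ℝ) + 1) ^ (α - 2)) :=
        Lam_sub_Lam_add_le h0 h1 k d
    _ ≤ d * (1 * (k : ℝ) ^ (α - 2)) := by
        have hpow : ((k : ℝ) + 1) ^ (α - 2) ≤ (k : ℝ) ^ (α - 2) :=
          Real.rpow_le_rpow_of_nonpos hk' (by linarith) (by linarith)
        gcongr ?_ * (?_ * ?_)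
        linarith
    _ = d / (k : ℝ) ^ (2 - α) := by
        rw [one_mul, div_eq_mul_inv, ← Real.rpow_neg hk'.le, neg_sub]

/-- For `0 < α < 1` there is `C > 0` (depending only on `α`) such that for all integers
`n > l` and `m ≥ n + 1`, `|Λ^{-α}(m−n) − Λ^{-α}(m−l)| ≤ C (n−l) / (m−n)^{2−α}`. -/
theorem lam_diff_bound (α : ℝ) (h0 : 0 < α) (h1 : α < 1) :
    ∃ C > 0, ∀ n l m : ℤ, l < n → n + 1 ≤ m →
      |Lam α (m - n).toNat - Lam α (m - l).toNat| ≤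
        C * ((n : ℝ) - l) / ((m : ℝ) - n) ^ (2 - α) := by
  refine ⟨1, one_pos, fun n l m hln hnm => ?_⟩
  obtain ⟨k, hk⟩ : ∃ k : ℕ, m - n = k := ⟨(m - n).toNat, by omega⟩
  obtain ⟨d, hd⟩ : ∃ d : ℕ, n - l = d := ⟨(n - l).toNat, by omega⟩
  have hml : m - l = ((k + d : ℕ) : ℤ) := by push_cast; omega
  have hkR : (m : ℝ) - n = k := by exact_mod_cast hk
  have hdR : (n : ℝ) - l = d := by exact_mod_cast hd
  rw [hk, hml, Int.toNat_natCast, Int.toNat_natCast, hkR, hdR, one_mul]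
  exact abs_Lam_sub_Lam_add_le h0.le h1.le (by omega) d
end

section
/- Let 0 < α < 1 and let f : ℤ → ℝ satisfy ∑_{m=0}^∞ |f(n+m)|/(1+m)^{1−α} < ∞ for every n ∈ ℤ. Then (1/Γ(α)) ∫_0^∞ t^{α-1} T_{t,+} f(n) dt = ∑_{j=0}^∞ Λ^{-α}(j) f(n+j), i.e., the negative fractional power (δ_right)^{-α} f(n) defined via the heat semigroup equals the series with kernel Λ^{-α}. -/
/-!
Expanding `T_{t,+} f(n)` and integrating term by term, the `j`-th term contributes
`f(n+j)/j! · ∫₀^∞ t^{α+j-1} e^{-t} dt = Γ(α+j)/j! · f(n+j) = Γ(α) Λ^{-α}(j) f(n+j)`.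
The interchange of sum and integral is justified by the bound `Λ^{-α}(j) ≤ (1+j)^{α-1}`,
which makes the summability hypothesis exactly the summability of the integrals of the
absolute values of the terms. That bound follows from `(α+i)/(i+1) = 1 - (1-α)/(i+1) ≤ e^{-(1-α)/(i+1)}`
and `log (m+1) ≤ H_m`.
-/

open MeasureTheory
open scoped BigOperators

lemma Lam_eq_prod_div (α : ℝ) (m : ℕ) :
    Lam α m = ∏ i ∈ Finset.range m, ((α + i) / (i + 1)) := by
  rw [Lam, Finset.prod_div_distrib, ← Finset.prod_range_add_one_eq_factorial m]
  push_cast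
  rfl

lemma Lam_le_one_add_rpow {α : ℝ} (h0 : 0 ≤ α) (h1 : α ≤ 1) (m : ℕ) :
    Lam α m ≤ (1 + (m : ℝ)) ^ (α - 1) := by
  have hfactor : ∀ i : ℕ, (α + i) / (i + 1) ≤ Real.exp (-(1 - α) * ((i : ℝ) + 1)⁻¹) := by
    intro i
    have h := Real.add_one_le_exp (-(1 - α) * ((i : ℝ) + 1)⁻¹)
    have hi : (i : ℝ) + 1 ≠ 0 := by positivity
    calc (α + i) / (i + 1) = -(1 - α) * ((i : ℝ) + 1)⁻¹ + 1 := by field_simp; ring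
      _ ≤ _ := h
  have hharmonic : Real.log (1 + m) ≤ ∑ i ∈ Finset.range m, ((i : ℝ) + 1)⁻¹ := by
    have h := log_add_one_le_harmonic m
    rw [harmonic] at h
    push_cast at h
    rwa [add_comm]
  rw [Lam_eq_prod_div, Real.rpow_def_of_pos (by positivity)]
  calc ∏ i ∈ Finset.range m, ((α + i) / (i + 1))
      ≤ ∏ i ∈ Finset.range m, Real.exp (-(1 - α) * ((i : ℝ) + 1)⁻¹) :=
        Finset.prod_le_prod (fun i _ => by positivity) (fun i _ => hfactor i)
    _ = Real.exp (-(1 - α) * ∑ i ∈ Finset.range m, ((i : ℝ) + 1)⁻¹) := by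
        rw [← Real.exp_sum, Finset.mul_sum]
    _ ≤ Real.exp (Real.log (1 + m) * (α - 1)) := by
        have h := mul_le_mul_of_nonneg_left hharmonic (sub_nonneg.2 h1)
        exact Real.exp_le_exp.2 (by linarith)

lemma Lam_nonneg_s12 {α : ℝ} (h0 : 0 ≤ α) (m : ℕ) : 0 ≤ Lam α m := by
  unfold Lam
  positivity

lemma summable_Lam_mul_abs {α : ℝ} (h0 : 0 ≤ α) (h1 : α ≤ 1) {a : ℕ → ℝ}
    (ha : Summable fun m : ℕ => |a m| / (1 + (m : ℝ)) ^ (1 - α)) :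
    Summable fun m : ℕ => Lam α m * |a m| := by
  refine ha.of_nonneg_of_le (fun m => mul_nonneg (Lam_nonneg_s12 h0 m) (abs_nonneg _)) fun m => ?_
  rw [div_eq_mul_inv, ← Real.rpow_neg (by positivity), neg_sub, mul_comm |a m|]
  exact mul_le_mul_of_nonneg_right (Lam_le_one_add_rpow h0 h1 m) (abs_nonneg _)

lemma Real.Gamma_add_nat {α : ℝ} (hα : ∀ k : ℕ, α ≠ -k) (m : ℕ) :
    Real.Gamma (α + m) = Real.Gamma α * ∏ i ∈ Finset.range m, (α + i) := by
  induction m with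
  | zero => simp
  | succ m ih =>
    have hm : α + m ≠ 0 := fun h => hα m (by linarith)
    rw [Nat.cast_succ, ← add_assoc, Real.Gamma_add_one hm, ih, Finset.prod_range_succ]
    ring

lemma Gamma_add_nat_div_factorial {α : ℝ} (hα : ∀ k : ℕ, α ≠ -k) (m : ℕ) :
    Real.Gamma (α + m) / m.factorial = Real.Gamma α * Lam α m := by
  rw [Real.Gamma_add_nat hα, Lam, mul_div_assoc]

lemma rpow_mul_exp_neg_mul_pow_div_factorial (α : ℝ) (j : ℕ) {t : ℝ} (ht : 0 < t) :
    t ^ (α - 1) * (Real.exp (-t) * (t ^ j / j.factorial))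
      = (j.factorial : ℝ)⁻¹ * (Real.exp (-t) * t ^ (α + j - 1)) := by
  rw [add_sub_right_comm, Real.rpow_add ht, Real.rpow_natCast]
  ring

lemma integrableOn_rpow_mul_exp_neg_mul_pow_div_factorial {α : ℝ} (hα : 0 < α) (j : ℕ) :
    IntegrableOn (fun t : ℝ => t ^ (α - 1) * (Real.exp (-t) * (t ^ j / j.factorial)))
      (Set.Ioi 0) :=
  IntegrableOn.congr_fun
    ((Real.GammaIntegral_convergent (by positivity : 0 < α + j)).const_mul _)
    (fun _ ht => (rpow_mul_exp_neg_mul_pow_div_factorial α j ht).symm) measurableSet_Ioi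

lemma integral_rpow_mul_exp_neg_mul_pow_div_factorial {α : ℝ} (hα : 0 < α) (j : ℕ) :
    ∫ t in Set.Ioi (0 : ℝ), t ^ (α - 1) * (Real.exp (-t) * (t ^ j / j.factorial))
      = Real.Gamma α * Lam α j := by
  rw [setIntegral_congr_fun measurableSet_Ioi
      (fun _ ht => rpow_mul_exp_neg_mul_pow_div_factorial α j ht),
    integral_const_mul, ← Real.Gamma_eq_integral (by positivity), inv_mul_eq_div,
    Gamma_add_nat_div_factorial (fun k => by have : (0 : ℝ) ≤ k := k.cast_nonneg; linarith)]

lemma integral_rpow_mul_tsum_exp_neg_mul_pow_div_factorial {α : ℝ} (hα : 0 < α) {a : ℕ → ℝ}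
    (ha : Summable fun j : ℕ => Lam α j * |a j|) :
    ∫ t in Set.Ioi (0 : ℝ), t ^ (α - 1) * ∑' j : ℕ, Real.exp (-t) * (t ^ j / j.factorial) * a j
      = Real.Gamma α * ∑' j : ℕ, Lam α j * a j := by
  set K : ℕ → ℝ → ℝ := fun j t => t ^ (α - 1) * (Real.exp (-t) * (t ^ j / j.factorial))
  have hK_integral (j : ℕ) : ∫ t in Set.Ioi (0 : ℝ), K j t = Real.Gamma α * Lam α j :=
    integral_rpow_mul_exp_neg_mul_pow_div_factorial hα j
  have hK_nonneg (j : ℕ) {t : ℝ} (ht : t ∈ Set.Ioi 0) : 0 ≤ K j t := by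
    have : 0 < t := ht
    positivity
  have hterm_integrable (j : ℕ) :
      Integrable (fun t => K j t * a j) (volume.restrict (Set.Ioi 0)) :=
    (integrableOn_rpow_mul_exp_neg_mul_pow_div_factorial hα j).mul_const _
  have hterm_norm (j : ℕ) :
      ∫ t in Set.Ioi (0 : ℝ), ‖K j t * a j‖ = Real.Gamma α * (Lam α j * |a j|) := by
    rw [setIntegral_congr_fun measurableSet_Ioi (g := fun t => K j t * |a j|)
        (fun t ht => by simp only [norm_mul, Real.norm_eq_abs, abs_of_nonneg (hK_nonneg j ht)]),
      integral_mul_const, hK_integral, mul_assoc]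
  calc ∫ t in Set.Ioi (0 : ℝ), t ^ (α - 1) *
          ∑' j : ℕ, Real.exp (-t) * (t ^ j / j.factorial) * a j
      = ∫ t in Set.Ioi (0 : ℝ), ∑' j : ℕ, K j t * a j := by
        simp only [K, ← tsum_mul_left, mul_assoc]
    _ = ∑' j : ℕ, ∫ t in Set.Ioi (0 : ℝ), K j t * a j :=
        (integral_tsum_of_summable_integral_norm hterm_integrable
          (by simpa only [hterm_norm] using ha.mul_left (Real.Gamma α))).symm
    _ = ∑' j : ℕ, Real.Gamma α * (Lam α j * a j) := by
        simp only [integral_mul_const, hK_integral, mul_assoc]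
    _ = Real.Gamma α * ∑' j : ℕ, Lam α j * a j := tsum_mul_left

/-- The negative fractional power `(δ_right)^{-α}` defined via the semigroup equals the
series with kernel `Λ^{-α}`:
`(1/Γ(α)) ∫₀^∞ t^{α-1} T_{t,+}f(n) dt = ∑ⱼ Λ^{-α}(j) f(n+j)`. -/
theorem fractional_integral_semigroup_formula (α : ℝ) (h0 : 0 < α) (h1 : α < 1)
    (f : ℤ → ℝ)
    (hf : ∀ n : ℤ, Summable (fun m : ℕ => |f (n + m)| / (1 + (m : ℝ)) ^ (1 - α))) :
    ∀ n : ℤ,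
      (1 / Real.Gamma α) *
          ∫ t in Set.Ioi (0 : ℝ),
            t ^ (α - 1) * ∑' j : ℕ, Real.exp (-t) * (t ^ j / (Nat.factorial j)) * f (n + j) =
        ∑' j : ℕ, Lam α j * f (n + j) := by
  intro n
  rw [integral_rpow_mul_tsum_exp_neg_mul_pow_div_factorial h0
      (summable_Lam_mul_abs h0.le h1.le (hf n)),
    ← mul_assoc, one_div_mul_cancel (Real.Gamma_pos_of_pos h0).ne', one_mul]
end

section
/- For α, β ∈ ℝ and u : ℤ_h → ℝ such that all series involved converge absolutely, the composition identity (δ_right)^{α}((δ_right)^{β} u)(nh) = (δ_right)^{α+β} u(nh) holds for every n ∈ ℤ. -/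
/-!
Up to sign, `Lam x m` is the generalized binomial coefficient `choose (-x) m`, so the
Chu–Vandermonde identity gives `∑_{i+j=m} Lam x i * Lam y j = Lam (x+y) m`. Absolute summability
lets the double series be regrouped along the antidiagonals `i + j = m`, on which
`u (n + i + j)` is constant, and `h ^ (-α) * h ^ (-β) = h ^ (-(α + β))` because `h > 0`.
-/

open scoped BigOperators

open Finset Polynomial

theorem descPochhammer_smeval_eq_prod_range {R : Type*} [CommRing R] (r : R) (m : ℕ) :
    (descPochhammer ℤ m).smeval r = ∏ i ∈ range m, (r - i) := by
  induction m with
  | zero => simp [smeval_one]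
  | succ n ih =>
    rw [descPochhammer_succ_right, smeval_mul, ih, prod_range_succ]
    simp [smeval_sub, smeval_X, smeval_natCast]

theorem Lam_eq_neg_one_pow_mul_choose (x : ℝ) (m : ℕ) :
    Lam x m = (-1) ^ m * Ring.choose (-x) m := by
  have hsign : ((-1 : ℝ) ^ m) * (-1) ^ m = 1 := by rw [← mul_pow]; simp
  have hprod : ∏ i ∈ range m, (-x - i) = (-1) ^ m * ∏ i ∈ range m, (x + (i : ℝ)) := by
    simp only [show ∀ i : ℕ, -x - i = -(x + i) by intro; ring, prod_neg, card_range]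
  rw [Lam, Ring.choose_eq_smul, descPochhammer_smeval_eq_prod_range, smul_eq_mul, hprod]
  linear_combination (-(∏ i ∈ range m, (x + (i : ℝ))) / m.factorial) * hsign

theorem Lam_add (x y : ℝ) (m : ℕ) :
    Lam (x + y) m = ∑ ij ∈ antidiagonal m, Lam x ij.1 * Lam y ij.2 := by
  simp only [Lam_eq_neg_one_pow_mul_choose, neg_add, Ring.add_choose_eq m (Commute.all (-x) (-y)),
    mul_sum]
  refine sum_congr rfl fun ij hij => ?_
  rw [← mem_antidiagonal.mp hij, pow_add]
  ring

theorem Summable.tsum_eq_tsum_sum_antidiagonal {A α : Type*} [AddCommMonoid A] [HasAntidiagonal A]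
    [AddCommMonoid α] [TopologicalSpace α] [T3Space α] [ContinuousAdd α] {f : A × A → α}
    (hf : Summable f) : ∑' p, f p = ∑' n, ∑ kl ∈ antidiagonal n, f kl := by
  conv_rhs => congr; ext; rw [← Finset.sum_finset_coe, ← tsum_fintype (L := .unconditional _)]
  rw [← HasAntidiagonal.sigmaAntidiagonalEquivProd.tsum_eq f]
  exact (HasAntidiagonal.sigmaAntidiagonalEquivProd.summable_iff.mpr hf).tsum_sigma'
    fun n ↦ (hasSum_fintype _).summable

theorem sum_antidiagonal_Lam_mul_shift (x y : ℝ) (u : ℤ → ℝ) (n : ℤ) (m : ℕ) :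
    ∑ ij ∈ antidiagonal m, Lam x ij.1 * Lam y ij.2 * u (n + ij.1 + ij.2) =
      Lam (x + y) m * u (n + m) := by
  rw [Lam_add, sum_mul]
  refine sum_congr rfl fun ij hij => ?_
  rw [← mem_antidiagonal.mp hij, Nat.cast_add, add_assoc]

/-- `u n` stands for the value of `u` at `nh`. -/
theorem fractional_composition_general (α β : ℝ) (h : ℝ) (hh : 0 < h) (u : ℤ → ℝ)
    (habs : ∀ n : ℤ, Summable (fun q : ℕ × ℕ => |Lam (-α) q.1 * Lam (-β) q.2 * u (n + q.1 + q.2)|)) :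
    ∀ n : ℤ,
      h ^ (-α) * ∑' j : ℕ, Lam (-α) j *
          (h ^ (-β) * ∑' k : ℕ, Lam (-β) k * u (n + j + k)) =
        h ^ (-(α + β)) * ∑' j : ℕ, Lam (-(α + β)) j * u (n + j) := by
  intro n
  have hf := (habs n).of_abs
  calc h ^ (-α) * ∑' j : ℕ, Lam (-α) j * (h ^ (-β) * ∑' k : ℕ, Lam (-β) k * u (n + j + k))
      = h ^ (-α) * h ^ (-β) * ∑' j : ℕ, ∑' k : ℕ, Lam (-α) j * Lam (-β) k * u (n + j + k) := by
        simp only [mul_left_comm _ (h ^ (-β)), ← tsum_mul_left, mul_assoc]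
    _ = h ^ (-(α + β)) * ∑' m : ℕ, Lam (-(α + β)) m * u (n + m) := by
        rw [← Real.rpow_add hh, ← neg_add, ← hf.tsum_prod' hf.prod_factor,
          hf.tsum_eq_tsum_sum_antidiagonal, neg_add]
        simp only [sum_antidiagonal_Lam_mul_shift]

/-- Composition: `(δ_right)^{α}((δ_right)^{β}u) = (δ_right)^{α+β}u` whenever all the
series involved converge absolutely. Here `u n` is the value of `u` at `nh`. -/
theorem fractional_composition (α β : ℝ) (h : ℝ) (hh : 0 < h) (u : ℤ → ℝ)
    (habs : ∀ n : ℤ, Summable (fun q : ℕ × ℕ => |Lam (-α) q.1 * Lam (-β) q.2 * u (n + q.1 + q.2)|))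
    (habs' : ∀ n : ℤ, Summable (fun j : ℕ => |Lam (-(α + β)) j * u (n + j)|)) :
    ∀ n : ℤ,
      h ^ (-α) * ∑' j : ℕ, Lam (-α) j *
          (h ^ (-β) * ∑' k : ℕ, Lam (-β) k * u (n + j + k)) =
        h ^ (-(α + β)) * ∑' j : ℕ, Lam (-(α + β)) j * u (n + j) :=
  fractional_composition_general α β h hh u habs
end
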